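/- For all r, s ∈ ℕ with r, s ≥ 1, every n ∈ ℕ, and every x ∈ ℚ, one has Σ_{m=0}^{n} C(n,m) · D_m^{(r)}(x) · Ch_{n−m}^{(s)} = Σ_{m=0}^{n} BE_m^{(r,s)}(x) · S_1(n,m), where D_m^{(r)}(x) are the Daehee polynomials of order r, Ch_{n−m}^{(s)} = Ch_{n−m}^{(s)}(0) are the Changhee numbers of order s, BE_m^{(r,s)}(x) are the Bernoulli–Euler mixed-type polynomials of order (r,s), and S_1(n,m) are the signed Stirling numbers of the first kind. -/

import Mathlib

/-- `log(1+t) = ∑_{n ≥ 1} (-1)^{n+1} t^n / n` as a formal power series over `ℚ`. -/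
noncomputable def logOneAdd : PowerSeries ℚ :=
  PowerSeries.mk fun n => if n = 0 then 0 else (-1 : ℚ) ^ (n + 1) / n

/-- `e^{xt} = ∑_{n ≥ 0} x^n t^n / n!` as a formal power series over `ℚ`. -/
noncomputable def expMul (x : ℚ) : PowerSeries ℚ :=
  PowerSeries.mk fun n => x ^ n / (n.factorial : ℚ)

/-- Formal composition `f(g(t))` of power series, intended for `g` with zero
constant term (then `coeff n (g^m) = 0` for `m > n`, so the sum below is the
full composition). -/
noncomputable def psComp (f g : PowerSeries ℚ) : PowerSeries ℚ :=
  PowerSeries.mk fun n =>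
    ∑ m ∈ Finset.range (n + 1),
      PowerSeries.coeff m f * PowerSeries.coeff n (g ^ m)

/-- `(1+t)^x := exp (x · log(1+t))` as a formal power series over `ℚ`. -/
noncomputable def onePlusPow (x : ℚ) : PowerSeries ℚ :=
  psComp (PowerSeries.exp ℚ) (x • logOneAdd)

/-- The falling factorial `(x)_n = x (x-1) ⋯ (x-n+1)`. -/
def fallFact (x : ℚ) (n : ℕ) : ℚ := ∏ i ∈ Finset.range n, (x - (i : ℚ))

/-!
Substituting `t ↦ log(1+t)` into the generating function of the Bernoulli–Euler polynomials
turns `e^t` into `1+t` and `e^{xt}` into `(1+t)^x`, so the result is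
`(2/(t+2))^s (log(1+t)/t)^r (1+t)^x`, the product of the Daehee and Changhee generating functions.
Comparing coefficients of `t^n/n!`, the product gives the binomial convolution, and the
substitution gives the Stirling numbers through the expansions of `log(1+t)^m`.
-/

open PowerSeries Finset Nat

namespace PowerSeries

theorem coeff_subst_eq_sum_range {R : Type*} [CommRing R] {g : R⟦X⟧} (hg : constantCoeff g = 0)
    (f : R⟦X⟧) (n : ℕ) :
    coeff n (f.subst g) = ∑ m ∈ range (n + 1), coeff m f * coeff n (g ^ m) := by
  rw [coeff_subst' (HasSubst.of_constantCoeff_zero' hg)]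
  refine finsum_eq_sum_of_support_subset _ fun m hm => ?_
  by_contra hmn
  have hX : (X : R⟦X⟧) ^ m ∣ g ^ m := pow_dvd_pow_of_dvd (X_dvd_iff.mpr hg) m
  exact hm (by simp only [X_pow_dvd_iff.mp hX n (by simpa using hmn), smul_zero])

theorem one_add_X_mul_derivative_log (A : Type*) [CommRing A] [Algebra ℚ A] :
    (1 + X) * d⁄dX A (log A) = 1 := by
  ext n
  rw [deriv_log]
  cases n with
  | zero => simp
  | succ n => simp [add_mul, coeff_succ_X_mul, pow_succ, coeff_one]

theorem exp_subst_log (A : Type*) [CommRing A] [Algebra ℚ A] :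
    (exp A).subst (log A) = 1 + X := by
  have := IsAddTorsionFree.of_module_rat (M := A)
  -- `exp(log(1+t)) · (1+t)⁻¹` has derivative zero, where `(1+t)⁻¹ = log'`.
  set g := d⁄dX A (log A)
  have hg : (1 + X) * g = 1 := one_add_X_mul_derivative_log A
  have hdg : d⁄dX A g = -g ^ 2 := by
    have := congrArg (d⁄dX A) hg
    rw [Derivation.leibniz, map_add, derivative_X, Derivation.map_one_eq_zero, smul_eq_mul,
      smul_eq_mul] at this
    linear_combination g * this - d⁄dX A g * hg
  have hE : d⁄dX A ((exp A).subst (log A)) = (exp A).subst (log A) * g := by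
    rw [derivative_subst HasSubst.log, derivative_exp]
  have hEg : (exp A).subst (log A) * g = 1 := by
    refine derivative.ext ?_ ?_
    · rw [Derivation.leibniz, hE, hdg, Derivation.map_one_eq_zero, smul_eq_mul, smul_eq_mul]
      ring
    · have hg0 := congrArg constantCoeff hg
      simp only [map_mul, map_add, map_one, constantCoeff_X, add_zero, one_mul] at hg0
      rw [map_mul, hg0, mul_one, map_one, ← coeff_zero_eq_constantCoeff_apply,
        coeff_subst_eq_sum_range constantCoeff_log]
      simp
  linear_combination (1 + X) * hEg - (exp A).subst (log A) * hg

theorem factorial_mul_coeff_mul_egf {K : Type*} [Field K] [CharZero K] (a b : ℕ → K) (n : ℕ) :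
    n ! * coeff n ((mk fun k => a k / k !) * mk fun k => b k / k !) =
      ∑ m ∈ range (n + 1), n.choose m * a m * b (n - m) := by
  rw [coeff_mul, Nat.sum_antidiagonal_eq_sum_range_succ_mk, Finset.mul_sum]
  refine Finset.sum_congr rfl fun m hm => ?_
  rw [coeff_mk, coeff_mk, Nat.cast_choose K (Nat.lt_succ_iff.mp (Finset.mem_range.mp hm))]
  field_simp

theorem factorial_mul_coeff_subst_egf {K : Type*} [Field K] [CharZero K] {g : K⟦X⟧}
    (hg : constantCoeff g = 0) (a : ℕ → K) (S : ℕ → ℕ → K)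
    (hS : ∀ m, g ^ m = (m ! : K) • mk fun k => S k m / k !) (n : ℕ) :
    n ! * coeff n ((mk fun k => a k / k !).subst g) = ∑ m ∈ range (n + 1), a m * S n m := by
  rw [coeff_subst_eq_sum_range hg, Finset.mul_sum]
  refine Finset.sum_congr rfl fun m _ => ?_
  have hm : (m ! : K) ≠ 0 := mod_cast factorial_ne_zero m
  have hn : (n ! : K) ≠ 0 := mod_cast factorial_ne_zero n
  rw [hS, coeff_smul, coeff_mk, coeff_mk, smul_eq_mul]
  field_simp

end PowerSeries

theorem logOneAdd_eq_log : logOneAdd = log ℚ := by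
  ext n
  simp [logOneAdd, coeff_log]

theorem psComp_eq_subst (f : ℚ⟦X⟧) {g : ℚ⟦X⟧} (hg : constantCoeff g = 0) :
    psComp f g = f.subst g := by
  ext n
  rw [psComp, coeff_mk, coeff_subst_eq_sum_range hg]

theorem onePlusPow_eq_subst (x : ℚ) : onePlusPow x = (exp ℚ).subst (x • log ℚ) := by
  rw [onePlusPow, logOneAdd_eq_log, psComp_eq_subst]
  simp

theorem onePlusPow_zero : onePlusPow 0 = 1 := by
  ext n
  rw [onePlusPow_eq_subst, zero_smul, coeff_subst_eq_sum_range (map_zero _)]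
  simp [coeff_one, zero_pow_eq, apply_ite (coeff n), mul_ite]

theorem expMul_eq_rescale (x : ℚ) : expMul x = rescale x (exp ℚ) := by
  ext n
  simp [expMul, coeff_exp, div_eq_mul_inv]

theorem expMul_subst_log (x : ℚ) : (expMul x).subst (log ℚ) = onePlusPow x := by
  rw [expMul_eq_rescale, rescale_eq_subst, subst_comp_subst_apply (HasSubst.smul_X' x)
    HasSubst.log, subst_smul HasSubst.log, subst_X HasSubst.log, onePlusPow_eq_subst]

theorem daehee_changhee_sum_eq_BE_stirling_sum_general
    (r s : ℕ) (n : ℕ) (x : ℚ)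
    (D Ch BE : ℕ → ℚ) (S1 : ℕ → ℕ → ℚ)
    (hD : logOneAdd ^ r * onePlusPow x =
      PowerSeries.X ^ r * (PowerSeries.mk fun k => D k / (k.factorial : ℚ)))
    (hCh : (2 : PowerSeries ℚ) ^ s * onePlusPow (0 : ℚ) =
      (PowerSeries.X + 2) ^ s * (PowerSeries.mk fun k => Ch k / (k.factorial : ℚ)))
    (hBE : (2 : PowerSeries ℚ) ^ s * PowerSeries.X ^ r * expMul x =
      (PowerSeries.exp ℚ + 1) ^ s * (PowerSeries.exp ℚ - 1) ^ r * (PowerSeries.mk fun k => BE k / (k.factorial : ℚ)))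
    (hS1 : ∀ m, logOneAdd ^ m =
      (m.factorial : ℚ) • (PowerSeries.mk fun k => S1 k m / (k.factorial : ℚ))) :
    ∑ m ∈ Finset.range (n + 1), (n.choose m : ℚ) * D m * Ch (n - m) =
      ∑ m ∈ Finset.range (n + 1), BE m * S1 n m := by
  simp only [logOneAdd_eq_log] at hD hS1
  rw [onePlusPow_zero, mul_one] at hCh
  have hBE_log := congrArg (substAlgHom (HasSubst.log (A := ℚ))) hBE
  simp only [map_mul, map_pow, map_add, map_sub, map_one, map_ofNat, coe_substAlgHom,
    subst_X HasSubst.log] at hBE_log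
  rw [exp_subst_log, expMul_subst_log] at hBE_log
  have hX2 : (X + 2 : ℚ⟦X⟧) ≠ 0 := fun h => by simpa [map_ofNat] using congrArg constantCoeff h
  have hegf : ((mk fun k => D k / k !) * mk fun k => Ch k / k !) =
      (mk fun k => BE k / k !).subst (log ℚ) := by
    refine mul_left_cancel₀ (mul_ne_zero (pow_ne_zero r X_ne_zero) (pow_ne_zero s hX2)) ?_
    linear_combination -(X + 2) ^ s * (mk fun k => Ch k / k !) * hD -
      log ℚ ^ r * onePlusPow x * hCh + hBE_log
  calc ∑ m ∈ range (n + 1), (n.choose m : ℚ) * D m * Ch (n - m)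
      = n ! * coeff n ((mk fun k => D k / k !) * mk fun k => Ch k / k !) :=
        (factorial_mul_coeff_mul_egf D Ch n).symm
    _ = ∑ m ∈ range (n + 1), BE m * S1 n m := by
        rw [hegf, factorial_mul_coeff_subst_egf constantCoeff_log BE S1 hS1]

theorem daehee_changhee_sum_eq_BE_stirling_sum
    (r s : ℕ) (hr : 1 ≤ r) (hs : 1 ≤ s) (n : ℕ) (x : ℚ)
    (D Ch BE : ℕ → ℚ) (S1 : ℕ → ℕ → ℚ)
    (hD : logOneAdd ^ r * onePlusPow x =
      PowerSeries.X ^ r * (PowerSeries.mk fun k => D k / (k.factorial : ℚ)))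
    (hCh : (2 : PowerSeries ℚ) ^ s * onePlusPow (0 : ℚ) =
      (PowerSeries.X + 2) ^ s * (PowerSeries.mk fun k => Ch k / (k.factorial : ℚ)))
    (hBE : (2 : PowerSeries ℚ) ^ s * PowerSeries.X ^ r * expMul x =
      (PowerSeries.exp ℚ + 1) ^ s * (PowerSeries.exp ℚ - 1) ^ r * (PowerSeries.mk fun k => BE k / (k.factorial : ℚ)))
    (hS1 : ∀ m, logOneAdd ^ m =
      (m.factorial : ℚ) • (PowerSeries.mk fun k => S1 k m / (k.factorial : ℚ))) :
    ∑ m ∈ Finset.range (n + 1), (n.choose m : ℚ) * D m * Ch (n - m) =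
      ∑ m ∈ Finset.range (n + 1), BE m * S1 n m :=
  daehee_changhee_sum_eq_BE_stirling_sum_general r s n x D Ch BE S1 hD hCh hBE hS1
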